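/- Let p ≥ 7 be a prime with p ≡ 1 (mod 4), and let x_1,...,x_5 be five pairwise distinct nonzero elements of Z_p. Then the six-term sequence (x_1,...,x_5,0) is a (Q_p,1)-weighted zero-sum sequence: there exist a_1,...,a_6 ∈ Q_p with a_1x_1+...+a_5x_5 + a_6·0 = 0 and a_1+...+a_6 = 0. -/

import Mathlib

def Qp (p : ℕ) : Set (ZMod p) := {x | ∃ u : (ZMod p)ˣ, (u : ZMod p) ^ 2 = x}

def Np (p : ℕ) : Set (ZMod p) := {x | IsUnit x ∧ x ∉ Qp p}

/-!
Two pigeonhole steps on the quadratic character split the five points into a pair `x i, x j`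
and a triple `x k, x l, x m` in which `x i, x j` and `x k, x l` lie in the same square class.
Since `-1` is a square, the pair carries the relation `-(x j / x i) • x i + 1 • x j = 0`. For
`p ≥ 7` every nonzero element is a sum `α + β` of two distinct nonzero squares; applied to
`-x m / x k`, the two orderings of `α, β` give two relations on the triple whose weight sums
differ, so one of them has nonzero total. Finally, for nonzero totals `σ, τ` there are nonzero
squares `u, v, r` with `u σ + v τ + r = 0` (two of `σ, τ, 1` lie in the same square class);
scaling the two relations by `u` and `v` and giving the point `0` the weight `r` finishes.
-/
open Finset

theorem isSquare_mul_iff_of_ne_zero {F : Type*} [Field F] [Fintype F] {a b : F}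
    (ha : a ≠ 0) (hb : b ≠ 0) : IsSquare (a * b) ↔ (IsSquare a ↔ IsSquare b) := by
  classical
  rw [← quadraticChar_one_iff_isSquare (mul_ne_zero ha hb), ← quadraticChar_one_iff_isSquare ha,
    ← quadraticChar_one_iff_isSquare hb, map_mul]
  rcases quadraticChar_dichotomy ha with h | h <;>
    rcases quadraticChar_dichotomy hb with h' | h' <;> simp [h, h']

section

variable {p : ℕ}

theorem ofNat_ne_zero_of_lt (n : ℕ) [n.AtLeastTwo] (hn : n < p) : (OfNat.ofNat n : ZMod p) ≠ 0 := by
  rw [← Nat.cast_ofNat, Ne, ZMod.natCast_eq_zero_iff]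
  exact fun h => (Nat.le_of_dvd (Nat.AtLeastTwo.prop.trans_lt' two_pos) h).not_gt hn

theorem one_mem_Qp : (1 : ZMod p) ∈ Qp p :=
  ⟨1, by simp⟩

theorem mul_mem_Qp {x y : ZMod p} (hx : x ∈ Qp p) (hy : y ∈ Qp p) : x * y ∈ Qp p := by
  obtain ⟨u, rfl⟩ := hx
  obtain ⟨v, rfl⟩ := hy
  exact ⟨u * v, by push_cast; ring⟩

variable [Fact p.Prime]

theorem div_mem_Qp {x y : ZMod p} (hx : x ∈ Qp p) (hy : y ∈ Qp p) : x / y ∈ Qp p := by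
  obtain ⟨u, rfl⟩ := hx
  obtain ⟨v, rfl⟩ := hy
  exact ⟨u / v, by push_cast; ring⟩

theorem mem_Qp_iff {x : ZMod p} : x ∈ Qp p ↔ x ≠ 0 ∧ IsSquare x := by
  constructor
  · rintro ⟨u, rfl⟩
    exact ⟨pow_ne_zero 2 u.ne_zero, u, sq _⟩
  · rintro ⟨hx, r, rfl⟩
    exact ⟨Units.mk0 r (left_ne_zero_of_mul hx), sq r⟩

theorem ne_zero_of_mem_Qp {x : ZMod p} (hx : x ∈ Qp p) : x ≠ 0 :=
  (mem_Qp_iff.1 hx).1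

theorem sq_mem_Qp {x : ZMod p} (hx : x ≠ 0) : x ^ 2 ∈ Qp p :=
  ⟨Units.mk0 x hx, rfl⟩

theorem neg_one_mem_Qp (hp1 : p % 4 = 1) : (-1 : ZMod p) ∈ Qp p :=
  mem_Qp_iff.2 ⟨neg_ne_zero.2 one_ne_zero, ZMod.exists_sq_eq_neg_one_iff.2 (by omega)⟩

theorem neg_mem_Qp (hp1 : p % 4 = 1) {x : ZMod p} (hx : x ∈ Qp p) : -x ∈ Qp p := by
  simpa using mul_mem_Qp (neg_one_mem_Qp hp1) hx

theorem mul_mem_Qp_of_not_isSquare {x y : ZMod p} (hx : x ≠ 0) (hy : y ≠ 0)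
    (hx' : ¬IsSquare x) (hy' : ¬IsSquare y) : x * y ∈ Qp p :=
  mem_Qp_iff.2 ⟨mul_ne_zero hx hy, (isSquare_mul_iff_of_ne_zero hx hy).2 (iff_of_false hx' hy')⟩

theorem div_mem_Qp_of_isSquare_iff {x y : ZMod p} (hx : x ≠ 0) (hy : y ≠ 0)
    (h : IsSquare x ↔ IsSquare y) : x / y ∈ Qp p := by
  refine mem_Qp_iff.2 ⟨div_ne_zero hx hy, ?_⟩
  rwa [div_eq_mul_inv, isSquare_mul_iff_of_ne_zero hx (inv_ne_zero hy), isSquare_inv]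

theorem exists_Qp_add_mem_Qp (hp : 7 ≤ p) : ∃ α ∈ Qp p, ∃ β ∈ Qp p, α + β ∈ Qp p := by
  have h2 : (2 : ZMod p) ≠ 0 := ofNat_ne_zero_of_lt 2 (by omega)
  have h3 : (3 : ZMod p) ≠ 0 := ofNat_ne_zero_of_lt 3 (by omega)
  have h5 : (5 : ZMod p) ≠ 0 := ofNat_ne_zero_of_lt 5 (by omega)
  by_cases hs2 : IsSquare (2 : ZMod p)
  · refine ⟨1, one_mem_Qp, 1, one_mem_Qp, ?_⟩
    rw [one_add_one_eq_two]
    exact mem_Qp_iff.2 ⟨h2, hs2⟩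
  by_cases hs5 : IsSquare (5 : ZMod p)
  · refine ⟨1, one_mem_Qp, 2 ^ 2, sq_mem_Qp h2, ?_⟩
    rw [show (1 : ZMod p) + 2 ^ 2 = 5 by norm_num]
    exact mem_Qp_iff.2 ⟨h5, hs5⟩
  · refine ⟨1, one_mem_Qp, 3 ^ 2, sq_mem_Qp h3, ?_⟩
    rw [show (1 : ZMod p) + 3 ^ 2 = 2 * 5 by norm_num]
    exact mul_mem_Qp_of_not_isSquare h2 h5 hs2 hs5

theorem exists_Qp_ne_add_eq_two (hp : 7 ≤ p) (hp1 : p % 4 = 1) :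
    ∃ α ∈ Qp p, ∃ β ∈ Qp p, α ≠ β ∧ α + β = 2 := by
  have h2 : (2 : ZMod p) ≠ 0 := ofNat_ne_zero_of_lt 2 (by omega)
  have h3 : (3 : ZMod p) ≠ 0 := ofNat_ne_zero_of_lt 3 (by omega)
  have h4 : (4 : ZMod p) ≠ 0 := ofNat_ne_zero_of_lt 4 (by omega)
  have h5 : (5 : ZMod p) ≠ 0 := ofNat_ne_zero_of_lt 5 (by omega)
  have h6 : (6 : ZMod p) ≠ 0 := ofNat_ne_zero_of_lt 6 (by omega)
  by_cases hs3 : IsSquare (3 : ZMod p)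
  · exact ⟨3, mem_Qp_iff.2 ⟨h3, hs3⟩, -1, neg_one_mem_Qp hp1,
      fun h => h4 (by linear_combination h), by norm_num⟩
  by_cases hs2 : IsSquare (2 : ZMod p)
  · exact ⟨2 ^ 2, sq_mem_Qp h2, -2, neg_mem_Qp hp1 (mem_Qp_iff.2 ⟨h2, hs2⟩),
      fun h => h6 (by linear_combination h), by norm_num⟩
  · exact ⟨2 * 3, mul_mem_Qp_of_not_isSquare h2 h3 hs2 hs3, -2 ^ 2, neg_mem_Qp hp1 (sq_mem_Qp h2),
      fun h => mul_ne_zero h2 h5 (by linear_combination h), by norm_num⟩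

theorem exists_Qp_add_eq (hp : 7 ≤ p) {w : ZMod p} (hw : w ≠ 0) :
    ∃ α ∈ Qp p, ∃ β ∈ Qp p, α + β = w := by
  by_cases hws : IsSquare w
  · obtain ⟨α, hα, β, hβ, hαβ⟩ := exists_Qp_add_mem_Qp hp
    have hscale := div_mem_Qp (mem_Qp_iff.2 ⟨hw, hws⟩) hαβ
    refine ⟨w / (α + β) * α, mul_mem_Qp hscale hα, w / (α + β) * β, mul_mem_Qp hscale hβ, ?_⟩
    rw [← mul_add, div_mul_cancel₀ _ (ne_zero_of_mem_Qp hαβ)]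
  · obtain ⟨a, b, rfl⟩ := ZMod.sq_add_sq p w
    have ha : a ≠ 0 := by rintro rfl; exact hws ⟨b, by ring⟩
    have hb : b ≠ 0 := by rintro rfl; exact hws ⟨a, by ring⟩
    exact ⟨a ^ 2, sq_mem_Qp ha, b ^ 2, sq_mem_Qp hb, rfl⟩

theorem exists_Qp_ne_add_eq (hp : 7 ≤ p) (hp1 : p % 4 = 1) {w : ZMod p} (hw : w ≠ 0) :
    ∃ α ∈ Qp p, ∃ β ∈ Qp p, α ≠ β ∧ α + β = w := by
  obtain ⟨α, hα, β, hβ, rfl⟩ := exists_Qp_add_eq hp hw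
  rcases ne_or_eq α β with hne | rfl
  · exact ⟨α, hα, β, hβ, hne, rfl⟩
  obtain ⟨γ, hγ, δ, hδ, hne, hγδ⟩ := exists_Qp_ne_add_eq_two hp hp1
  refine ⟨α * γ, mul_mem_Qp hα hγ, α * δ, mul_mem_Qp hα hδ,
    fun h => hne (mul_left_cancel₀ (ne_zero_of_mem_Qp hα) h), ?_⟩
  rw [← mul_add, hγδ]
  ring

theorem exists_Qp_mul_add_mul_add_eq_zero_of_isSquare_iff (hp : 7 ≤ p) {x y z : ZMod p}
    (hx : x ≠ 0) (hy : y ≠ 0) (hz : z ≠ 0) (hxy : IsSquare x ↔ IsSquare y) :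
    ∃ a ∈ Qp p, ∃ b ∈ Qp p, a * x + b * y + z = 0 := by
  obtain ⟨α, hα, β, hβ, hαβ⟩ := exists_Qp_add_eq hp (div_ne_zero (neg_ne_zero.2 hz) hx)
  refine ⟨α, hα, β * (x / y), mul_mem_Qp hβ (div_mem_Qp_of_isSquare_iff hx hy hxy), ?_⟩
  rw [eq_div_iff hx] at hαβ
  field_simp
  linear_combination hαβ

theorem exists_Qp_mul_add_mul_add_eq_zero_and_add_add_one_ne_zero (hp : 7 ≤ p) (hp1 : p % 4 = 1)
    {x y z : ZMod p} (hx : x ≠ 0) (hy : y ≠ 0) (hz : z ≠ 0) (hne : x ≠ y)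
    (hxy : IsSquare x ↔ IsSquare y) :
    ∃ a ∈ Qp p, ∃ b ∈ Qp p, a * x + b * y + z = 0 ∧ a + b + 1 ≠ 0 := by
  obtain ⟨α, hα, β, hβ, hαβ, hsum⟩ := exists_Qp_ne_add_eq hp hp1 (div_ne_zero (neg_ne_zero.2 hz) hx)
  set ρ := x / y
  have hρ : ρ ∈ Qp p := div_mem_Qp_of_isSquare_iff hx hy hxy
  have hρ1 : 1 - ρ ≠ 0 := sub_ne_zero.2 fun h => hne ((div_eq_one_iff_eq hy).1 h.symm)
  have hrel : ∀ a b, a + b = -z / x → a * x + b * ρ * y + z = 0 := by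
    intro a b h
    rw [eq_div_iff hx] at h
    simp only [ρ]
    field_simp
    linear_combination h
  -- the two orderings of the decomposition give totals differing by `(α - β) * (1 - ρ) ≠ 0`
  by_cases h : α + β * ρ + 1 = 0
  · refine ⟨β, hβ, α * ρ, mul_mem_Qp hα hρ, hrel β α (by rw [add_comm, hsum]), fun h' => ?_⟩
    exact mul_ne_zero (sub_ne_zero.2 hαβ) hρ1 (by linear_combination h - h')
  · exact ⟨α, hα, β * ρ, mul_mem_Qp hβ hρ, hrel α β hsum, h⟩

theorem exists_Qp_mul_add_mul_add_eq_zero (hp : 7 ≤ p) {σ τ : ZMod p} (hσ : σ ≠ 0)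
    (hτ : τ ≠ 0) : ∃ u ∈ Qp p, ∃ v ∈ Qp p, ∃ r ∈ Qp p, u * σ + v * τ + r = 0 := by
  by_cases hσs : IsSquare σ
  · obtain ⟨a, ha, b, hb, h⟩ :=
      exists_Qp_mul_add_mul_add_eq_zero_of_isSquare_iff hp one_ne_zero hσ hτ
        (iff_of_true IsSquare.one hσs)
    exact ⟨b, hb, 1, one_mem_Qp, a, ha, by linear_combination h⟩
  by_cases hτs : IsSquare τ
  · obtain ⟨a, ha, b, hb, h⟩ :=
      exists_Qp_mul_add_mul_add_eq_zero_of_isSquare_iff hp one_ne_zero hτ hσ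
        (iff_of_true IsSquare.one hτs)
    exact ⟨1, one_mem_Qp, b, hb, a, ha, by linear_combination h⟩
  · obtain ⟨a, ha, b, hb, h⟩ :=
      exists_Qp_mul_add_mul_add_eq_zero_of_isSquare_iff hp hσ hτ one_ne_zero
        (iff_of_false hσs hτs)
    exact ⟨a, ha, b, hb, 1, one_mem_Qp, h⟩

variable {ι : Type*}

def HasQpRelation (x : ι → ZMod p) (s : Finset ι) : Prop :=
  ∃ a : ι → ZMod p, (∀ i ∈ s, a i ∈ Qp p) ∧ ∑ i ∈ s, a i * x i = 0 ∧ ∑ i ∈ s, a i ≠ 0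

theorem hasQpRelation_pair [DecidableEq ι] (hp1 : p % 4 = 1) {x : ι → ZMod p} {i j : ι}
    (hij : i ≠ j) (hi : x i ≠ 0) (hj : x j ≠ 0) (hne : x i ≠ x j)
    (hcls : IsSquare (x i) ↔ IsSquare (x j)) :
    HasQpRelation x {i, j} := by
  have hq : x j / x i ∈ Qp p := div_mem_Qp_of_isSquare_iff hj hi hcls.symm
  refine ⟨fun n => if n = i then -(x j / x i) else 1, ?_, ?_, ?_⟩
  · simp [hij.symm, neg_mem_Qp hp1 hq, one_mem_Qp]
  · simp only [sum_pair hij, if_pos, if_neg hij.symm, neg_mul, one_mul, div_mul_cancel₀ _ hi,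
      neg_add_cancel]
  · simp only [sum_pair hij, if_pos, if_neg hij.symm]
    exact fun h => hne ((div_eq_one_iff_eq hi).1 (by linear_combination -h)).symm

theorem hasQpRelation_triple [DecidableEq ι] (hp : 7 ≤ p) (hp1 : p % 4 = 1) {x : ι → ZMod p}
    {k l m : ι} (hkl : k ≠ l) (hkm : k ≠ m) (hlm : l ≠ m) (hk : x k ≠ 0) (hl : x l ≠ 0)
    (hm : x m ≠ 0) (hne : x k ≠ x l) (hcls : IsSquare (x k) ↔ IsSquare (x l)) :
    HasQpRelation x {k, l, m} := by
  obtain ⟨a, ha, b, hb, hrel, hsum⟩ :=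
    exists_Qp_mul_add_mul_add_eq_zero_and_add_add_one_ne_zero hp hp1 hk hl hm hne hcls
  refine ⟨fun n => if n = k then a else if n = l then b else 1, ?_, ?_, ?_⟩
  · simp [hkl.symm, hkm.symm, hlm.symm, ha, hb, one_mem_Qp]
  · simpa [sum_insert, hkl, hkm, hlm, hkl.symm, hkm.symm, hlm.symm, add_assoc] using hrel
  · simpa [sum_insert, hkl, hkm, hlm, hkl.symm, hkm.symm, hlm.symm, add_assoc] using hsum

theorem exists_Qp_relation_of_hasQpRelation_compl [Fintype ι] [DecidableEq ι] (hp : 7 ≤ p)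
    {x : ι → ZMod p} {s : Finset ι} (hs : HasQpRelation x s) (hsc : HasQpRelation x sᶜ) :
    ∃ c : ι → ZMod p, ∃ r ∈ Qp p, (∀ i, c i ∈ Qp p) ∧ ∑ i, c i * x i = 0 ∧ ∑ i, c i + r = 0 := by
  obtain ⟨a, ha, hax, has⟩ := hs
  obtain ⟨b, hb, hbx, hbs⟩ := hsc
  obtain ⟨u, hu, v, hv, r, hr, huv⟩ := exists_Qp_mul_add_mul_add_eq_zero hp has hbs
  set c := s.piecewise (fun i => u * a i) (fun i => v * b i)
  have hc_mem : ∀ i ∈ s, c i = u * a i := fun i hi => piecewise_eq_of_mem _ _ _ hi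
  have hc_notMem : ∀ i ∉ s, c i = v * b i := fun i hi => piecewise_eq_of_notMem _ _ _ hi
  have hsplit : ∀ φ : ι → ZMod p,
      ∑ i, c i * φ i = u * ∑ i ∈ s, a i * φ i + v * ∑ i ∈ sᶜ, b i * φ i := by
    intro φ
    rw [← sum_add_sum_compl s, mul_sum, mul_sum]
    congr 1 <;> refine sum_congr rfl fun i hi => ?_
    · rw [hc_mem i hi, mul_assoc]
    · rw [hc_notMem i (mem_compl.1 hi), mul_assoc]
  refine ⟨c, r, hr, fun i => ?_, by rw [hsplit, hax, hbx]; ring, ?_⟩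
  · by_cases hi : i ∈ s
    · rw [hc_mem i hi]; exact mul_mem_Qp hu (ha i hi)
    · rw [hc_notMem i hi]; exact mul_mem_Qp hv (hb i (mem_compl.2 hi))
  · have htotal := hsplit 1
    simp only [Pi.one_apply, mul_one] at htotal
    rw [htotal, huv]

theorem exists_Qp_relation_of_five (hp : 7 ≤ p) (hp1 : p % 4 = 1) {x : Fin 5 → ZMod p}
    (hx : ∀ i, x i ≠ 0) (hinj : Function.Injective x) :
    ∃ c : Fin 5 → ZMod p, ∃ r ∈ Qp p, (∀ i, c i ∈ Qp p) ∧ ∑ i, c i * x i = 0 ∧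
      ∑ i, c i + r = 0 := by
  obtain ⟨i, j, hij, hcls_ij⟩ :=
    Fintype.exists_ne_map_eq_of_card_lt (fun n => IsSquare (x n)) (by simp)
  have hcard : ({i, j}ᶜ : Finset (Fin 5)).card = 3 := by rw [card_compl, card_pair hij]; rfl
  obtain ⟨k, hk, l, hl, hkl, hcls_kl⟩ := exists_ne_map_eq_of_card_lt_of_maps_to
    (s := {i, j}ᶜ) (t := (univ : Finset Prop)) (by rw [hcard]; simp)
    fun n _ => mem_univ (IsSquare (x n))
  obtain ⟨m, hm⟩ := card_eq_one.1 (by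
    rw [card_erase_of_mem (mem_erase.2 ⟨hkl.symm, hl⟩), card_erase_of_mem hk, hcard] :
      ((({i, j}ᶜ : Finset (Fin 5)).erase k).erase l).card = 1)
  have hmem : m ∈ (({i, j}ᶜ : Finset (Fin 5)).erase k).erase l := hm ▸ mem_singleton_self m
  have hcompl : ({i, j}ᶜ : Finset (Fin 5)) = {k, l, m} := by
    rw [← hm, insert_erase (mem_erase.2 ⟨hkl.symm, hl⟩), insert_erase hk]
  refine exists_Qp_relation_of_hasQpRelation_compl hp
    (hasQpRelation_pair hp1 hij (hx i) (hx j) (hinj.ne hij) (Iff.of_eq hcls_ij)) ?_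
  rw [hcompl]
  exact hasQpRelation_triple hp hp1 hkl (ne_of_mem_erase (mem_of_mem_erase hmem)).symm
    (ne_of_mem_erase hmem).symm (hx k) (hx l) (hx m) (hinj.ne hkl) (Iff.of_eq hcls_kl)

end

theorem stmt_18 (p : ℕ) [Fact p.Prime] (hp : 7 ≤ p) (hp1 : p % 4 = 1)
    (x : Fin 5 → ZMod p) (hnz : ∀ i, x i ≠ 0) (hinj : Function.Injective x) :
    ∃ a : Fin 6 → ZMod p, (∀ i, a i ∈ Qp p) ∧
      (∑ i : Fin 5, a (Fin.castSucc i) * x i) + a 5 * 0 = 0 ∧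
      ∑ i, a i = 0 := by
  obtain ⟨c, r, hr, hc, hcx, hcr⟩ := exists_Qp_relation_of_five hp hp1 hnz hinj
  refine ⟨Fin.snoc c r, fun n => ?_, by simpa using hcx, ?_⟩
  · induction n using Fin.lastCases with
    | last => rw [Fin.snoc_last]; exact hr
    | cast i => rw [Fin.snoc_castSucc]; exact hc i
  · rw [Fin.sum_univ_castSucc]
    simpa only [Fin.snoc_castSucc, Fin.snoc_last] using hcr
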